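/- arXiv:2602.06662 — 7 statements merged into one kernel-verified Lean document; each statement's English description precedes it below -/
import Mathlib

section
/- Let d ≥ 1, let α : Fin d → ℝ with α_i > 0 for all i, and let K = {x ∈ ℝ^d : |x_i| ≤ α_i for all i}. Then G(K) ≤ ∏_{i=1}^d ⌊2/λ_i(K) + 1⌋, where λ_i(K) are the successive minima of K with respect to ℤ^d; that is, the Betke–Henk–Wills conjecture holds for axis-aligned boxes. -/
open scoped Pointwise

noncomputable section

/-- The integer lattice `ℤ^d` inside `ℝ^d` (with the Euclidean structure). -/
def intLattice (d : ℕ) : Set (EuclideanSpace ℝ (Fin d)) :=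
  {x | ∀ i, ∃ n : ℤ, x i = n}

/-- The lattice point enumerator `G(K) = |K ∩ ℤ^d|`. -/
def latticeCount {d : ℕ} (K : Set (EuclideanSpace ℝ (Fin d))) : ℕ :=
  (K ∩ intLattice d).ncard

/-- The `i`-th successive minimum of `K` with respect to `ℤ^d`:
`λ_i(K) = inf {λ > 0 : dim span((λ•K) ∩ ℤ^d) ≥ i}`. -/
def succMin {d : ℕ} (K : Set (EuclideanSpace ℝ (Fin d))) (i : ℕ) : ℝ :=
  sInf {lam : ℝ | 0 < lam ∧
    i ≤ Module.finrank ℝ (Submodule.span ℝ ((lam • K) ∩ intLattice d))}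

/-- Operator norm of a `d × d` real matrix acting on Euclidean `ℝ^d`. -/
def matOpNorm {d : ℕ} (A : Matrix (Fin d) (Fin d) ℝ) : ℝ :=
  ‖Matrix.toEuclideanCLM (𝕜 := ℝ) A‖

lemma bhw_count_eq {d : ℕ} (α : Fin d → ℝ) (hα : ∀ i, 0 < α i) :
    (latticeCount {x : EuclideanSpace ℝ (Fin d) | ∀ i, |x i| ≤ α i} : ℤ)
      = ∏ i, (2 * ⌊α i⌋ + 1) := by
  classical
  set ψ : (Fin d → ℤ) → EuclideanSpace ℝ (Fin d) := fun n => WithLp.toLp 2 (fun i => (n i : ℝ)) with hψ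
  have hinj : Function.Injective ψ := by
    intro a b hab
    funext i
    have h : ((a i : ℝ)) = b i := congrFun (congrArg WithLp.ofLp hab) i
    exact_mod_cast h
  set T : Finset (Fin d → ℤ) := Fintype.piFinset fun i => Finset.Icc (-⌊α i⌋) ⌊α i⌋ with hT
  have hset : {x : EuclideanSpace ℝ (Fin d) | ∀ i, |x i| ≤ α i} ∩ intLattice d = ψ '' ↑T := by
    ext x
    simp only [Set.mem_inter_iff, Set.mem_setOf_eq, intLattice, Set.mem_image, Finset.coe_sort_coe,
      Finset.mem_coe, hT, Fintype.mem_piFinset, Finset.mem_Icc]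
    constructor
    · rintro ⟨hb, hl⟩
      choose n hn using hl
      refine ⟨n, fun i => ?_, ?_⟩
      · have h1 : |(n i : ℝ)| ≤ α i := by rw [← hn i]; exact hb i
        rw [abs_le] at h1
        refine ⟨?_, Int.le_floor.mpr h1.2⟩
        rw [← Int.ceil_neg]
        exact Int.ceil_le.mpr h1.1
      · ext i; exact (hn i).symm
    · rintro ⟨n, hn, rfl⟩
      refine ⟨fun i => ?_, fun i => ⟨n i, rfl⟩⟩
      have h1 : ((-⌊α i⌋ : ℤ) : ℝ) ≤ n i := by exact_mod_cast (hn i).1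
      have h2 : ((n i : ℤ) : ℝ) ≤ ⌊α i⌋ := by exact_mod_cast (hn i).2
      have hf := Int.floor_le (α i)
      rw [abs_le]
      constructor
      · push_cast at h1; linarith
      · exact le_trans h2 hf
  rw [latticeCount, hset, Set.ncard_image_of_injective _ hinj, Set.ncard_coe_finset]
  rw [hT, Fintype.card_piFinset]
  rw [Nat.cast_prod]
  apply Finset.prod_congr rfl
  intro i _
  have h0 : (0:ℤ) ≤ ⌊α i⌋ := Int.floor_nonneg.mpr (hα i).le
  rw [Int.card_Icc, Int.toNat_of_nonneg (by omega)]
  ring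

lemma bhw_rank_eq {d : ℕ} (α : Fin d → ℝ) (hα : ∀ i, 0 < α i) (lam : ℝ) (hlam : 0 < lam) :
    Module.finrank ℝ (Submodule.span ℝ
        ((lam • {x : EuclideanSpace ℝ (Fin d) | ∀ j, |x j| ≤ α j}) ∩ intLattice d))
      = (Finset.univ.filter fun j : Fin d => 1 ≤ lam * α j).card := by
  classical
  set K : Set (EuclideanSpace ℝ (Fin d)) := {x | ∀ j, |x j| ≤ α j} with hK
  set J : Finset (Fin d) := Finset.univ.filter fun j => 1 ≤ lam * α j with hJ
  set E : Set (EuclideanSpace ℝ (Fin d)) :=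
    (fun j => EuclideanSpace.single j (1:ℝ)) '' ↑J with hE
  have hmem : ∀ x : EuclideanSpace ℝ (Fin d),
      x ∈ lam • K ↔ ∀ j, |x j| ≤ lam * α j := by
    intro x
    rw [Set.mem_smul_set_iff_inv_smul_mem₀ hlam.ne']
    simp only [hK, Set.mem_setOf_eq]
    constructor
    · intro h j
      have := h j
      have hx : (lam⁻¹ • x) j = lam⁻¹ * x j := rfl
      rw [hx, abs_mul, abs_inv, abs_of_pos hlam] at this
      rw [← mul_le_mul_iff_right₀ (inv_pos.mpr hlam)]
      calc lam⁻¹ * |x j| ≤ α j := this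
        _ = lam⁻¹ * (lam * α j) := by field_simp
    · intro h j
      have hx : (lam⁻¹ • x) j = lam⁻¹ * x j := rfl
      rw [hx, abs_mul, abs_inv, abs_of_pos hlam]
      calc lam⁻¹ * |x j| ≤ lam⁻¹ * (lam * α j) := by
            exact mul_le_mul_of_nonneg_left (h j) (by positivity)
        _ = α j := by field_simp
  have hspan : Submodule.span ℝ ((lam • K) ∩ intLattice d) = Submodule.span ℝ E := by
    apply le_antisymm
    · rw [Submodule.span_le]
      rintro x ⟨hx1, hx2⟩
      choose n hn using hx2
      have hzero : ∀ j, j ∉ J → x j = 0 := by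
        intro j hj
        rw [hJ, Finset.mem_filter] at hj
        push_neg at hj
        have hlt : lam * α j < 1 := hj (Finset.mem_univ j)
        have habs : |x j| ≤ lam * α j := (hmem x).mp hx1 j
        have : |(n j : ℝ)| < 1 := by rw [← hn j]; linarith
        have h2 : |n j| < 1 := by exact_mod_cast this
        have := abs_lt.mp h2
        have : n j = 0 := by omega
        rw [hn j, this]; norm_num
      have hxsum : x = ∑ j ∈ J, x j • EuclideanSpace.single j (1:ℝ) := by
        ext i
        have : (∑ j ∈ J, x j • EuclideanSpace.single j (1:ℝ)) i
            = ∑ j ∈ J, x j * (if i = j then (1:ℝ) else 0) := by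
          rw [WithLp.ofLp_sum, Finset.sum_apply]
          apply Finset.sum_congr rfl
          intro j _
          rw [PiLp.smul_apply, EuclideanSpace.single_apply, smul_eq_mul]
        rw [this]
        simp only [mul_ite, mul_one, mul_zero]
        rw [Finset.sum_ite_eq]
        by_cases hi : i ∈ J
        · simp [hi]
        · simp [hi, hzero i hi]
      rw [hxsum]
      apply Submodule.sum_mem
      intro j hj
      exact Submodule.smul_mem _ _ (Submodule.subset_span ⟨j, by simpa using hj, rfl⟩)
    · rw [Submodule.span_le]
      rintro _ ⟨j, hj, rfl⟩
      apply Submodule.subset_span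
      refine ⟨(hmem _).mpr ?_, ?_⟩
      · intro k
        simp only [EuclideanSpace.single_apply]
        by_cases hk : k = j
        · rw [if_pos hk, abs_one]
          subst hk
          exact (Finset.mem_filter.mp (Finset.mem_coe.mp hj)).2
        · rw [if_neg hk, abs_zero]
          exact le_of_lt (mul_pos hlam (hα k))
      · intro k
        simp only [EuclideanSpace.single_apply]
        by_cases hk : k = j
        · exact ⟨1, by simp [hk]⟩
        · exact ⟨0, by simp [hk]⟩
  rw [hspan]
  have hli : LinearIndependent ℝ ((↑) : E → EuclideanSpace ℝ (Fin d)) := by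
    have hb := (EuclideanSpace.basisFun (Fin d) ℝ).toBasis.linearIndependent
    have hr : E ⊆ Set.range (EuclideanSpace.basisFun (Fin d) ℝ).toBasis := by
      rintro _ ⟨j, hj, rfl⟩
      exact ⟨j, by simp [OrthonormalBasis.coe_toBasis, EuclideanSpace.basisFun_apply]⟩
    exact (hb.linearIndepOn_id.mono hr).linearIndependent
  rw [finrank_span_set_eq_card hli]
  have hsinj : Function.Injective (fun j : Fin d => EuclideanSpace.single j (1:ℝ)) := by
    intro a b h
    by_contra hab
    have := congrFun (congrArg WithLp.ofLp h) a
    simp only [EuclideanSpace.single_apply, if_pos rfl] at this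
    rw [if_neg hab] at this
    norm_num at this
  rw [Set.toFinset_image, Finset.card_image_of_injective _ hsinj]
  simp

lemma bhw_succMin_eq {d : ℕ} (α : Fin d → ℝ) (hα : ∀ i, 0 < α i) (i : Fin d) :
    succMin {x : EuclideanSpace ℝ (Fin d) | ∀ j, |x j| ≤ α j} (i.1 + 1)
      = (α (Tuple.sort (fun j => (α j)⁻¹) i))⁻¹ := by
  classical
  set β : Fin d → ℝ := fun j => (α j)⁻¹ with hβ
  set σ := Tuple.sort β with hσ
  have hmono : Monotone (β ∘ σ) := Tuple.monotone_sort β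
  have hβpos : ∀ j, 0 < β j := fun j => inv_pos.mpr (hα j)
  have hfilter : ∀ lam : ℝ, 0 < lam →
      (Finset.univ.filter fun j : Fin d => 1 ≤ lam * α j)
        = Finset.univ.filter fun j => β j ≤ lam := by
    intro lam hlam
    apply Finset.filter_congr
    intro j _
    simp only [hβ, eq_iff_iff]
    rw [← one_div, div_le_iff₀ (hα j)]
  have hrank : ∀ lam : ℝ, 0 < lam →
      Module.finrank ℝ (Submodule.span ℝ
        ((lam • {x : EuclideanSpace ℝ (Fin d) | ∀ j, |x j| ≤ α j}) ∩ intLattice d))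
        = (Finset.univ.filter fun j : Fin d => β j ≤ lam).card := by
    intro lam hlam
    rw [bhw_rank_eq α hα lam hlam, hfilter lam hlam]
  set S : Set ℝ := {lam : ℝ | 0 < lam ∧
    i.1 + 1 ≤ Module.finrank ℝ (Submodule.span ℝ
      ((lam • {x : EuclideanSpace ℝ (Fin d) | ∀ j, |x j| ≤ α j}) ∩ intLattice d))} with hS
  have hSiff : ∀ lam : ℝ, lam ∈ S ↔ 0 < lam ∧
      i.1 + 1 ≤ (Finset.univ.filter fun j : Fin d => β j ≤ lam).card := by
    intro lam
    constructor
    · rintro ⟨h1, h2⟩; exact ⟨h1, by rwa [hrank lam h1] at h2⟩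
    · rintro ⟨h1, h2⟩; exact ⟨h1, by rwa [hrank lam h1]⟩
  have hmemS : β (σ i) ∈ S := by
    rw [hSiff]
    refine ⟨hβpos _, ?_⟩
    have hsub : Finset.image σ (Finset.Iic i) ⊆
        Finset.univ.filter fun j => β j ≤ β (σ i) := by
      intro j hj
      rw [Finset.mem_image] at hj
      obtain ⟨k, hk, rfl⟩ := hj
      rw [Finset.mem_filter]
      exact ⟨Finset.mem_univ _, hmono (Finset.mem_Iic.mp hk)⟩
    calc i.1 + 1 = (Finset.Iic i).card := by rw [Fin.card_Iic]
      _ = (Finset.image σ (Finset.Iic i)).card :=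
          (Finset.card_image_of_injective _ σ.injective).symm
      _ ≤ _ := Finset.card_le_card hsub
  have hlb : ∀ lam ∈ S, β (σ i) ≤ lam := by
    intro lam hlam
    rw [hSiff] at hlam
    obtain ⟨h1, h2⟩ := hlam
    by_contra hcon
    push_neg at hcon
    have hsub : (Finset.univ.filter fun j : Fin d => β j ≤ lam) ⊆
        Finset.image σ (Finset.Iio i) := by
      intro j hj
      rw [Finset.mem_filter] at hj
      rw [Finset.mem_image]
      refine ⟨σ.symm j, ?_, by simp⟩
      rw [Finset.mem_Iio]
      by_contra hk
      push_neg at hk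
      have : β (σ i) ≤ β (σ (σ.symm j)) := hmono hk
      rw [Equiv.apply_symm_apply] at this
      linarith [hj.2]
    have hcard := Finset.card_le_card hsub
    have : (Finset.image σ (Finset.Iio i)).card ≤ i.1 := by
      rw [Finset.card_image_of_injective _ σ.injective, Fin.card_Iio]
    omega
  exact le_antisymm (csInf_le ⟨β (σ i), fun x hx => hlb x hx⟩ hmemS)
    (le_csInf ⟨β (σ i), hmemS⟩ hlb)

/-- The Betke–Henk–Wills conjecture holds for axis-aligned boxes:
`G(K) ≤ ∏ i ⌊2/λ_i(K) + 1⌋`. -/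
theorem bhw_box (d : ℕ) (hd : 1 ≤ d) (α : Fin d → ℝ) (hα : ∀ i, 0 < α i) :
    (latticeCount {x : EuclideanSpace ℝ (Fin d) | ∀ i, |x i| ≤ α i} : ℤ) ≤
      ∏ i : Fin d,
        ⌊2 / succMin {x : EuclideanSpace ℝ (Fin d) | ∀ j, |x j| ≤ α j} (i.1 + 1) + 1⌋ := by
  classical
  rw [bhw_count_eq α hα]
  set σ := Tuple.sort (fun j : Fin d => (α j)⁻¹) with hσ
  calc ∏ i : Fin d, (2 * ⌊α i⌋ + 1)
      ≤ ∏ i : Fin d, ⌊2 * α i + 1⌋ := by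
        apply Finset.prod_le_prod
        · intro i _
          have := Int.floor_nonneg.mpr (hα i).le
          omega
        · intro i _
          rw [Int.floor_add_one]
          have : 2 * ⌊α i⌋ ≤ ⌊2 * α i⌋ := by
            apply Int.le_floor.mpr
            push_cast
            linarith [Int.floor_le (α i)]
          omega
    _ = ∏ i : Fin d, ⌊2 * α (σ i) + 1⌋ := (Equiv.prod_comp σ fun j => ⌊2 * α j + 1⌋).symm
    _ = ∏ i : Fin d,
        ⌊2 / succMin {x : EuclideanSpace ℝ (Fin d) | ∀ j, |x j| ≤ α j} (i.1 + 1) + 1⌋ := by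
        apply Finset.prod_congr rfl
        intro i _
        rw [bhw_succMin_eq α hα i, div_inv_eq_mul, ← hσ, mul_comm]
end
end

section
/- Let d ≥ 1 and let α : Fin d → ℤ with α_i ≥ 1 for all i, and let V = {v ∈ ℝ^d : v_i = ±α_i for all i} be the vertex set of the integer box K = {x : |x_i| ≤ α_i}. If R is a d×d real orthogonal matrix with ‖R − I‖ · √(Σ_i α_i²) < 1 and Rv ∈ ℤ^d for every v ∈ V, then R = I. (Small rotations mapping all vertices of an integer box to lattice points are trivial.) -/
open scoped Pointwise Matrix

noncomputable section

/-!
For a vertex `v` of the box, `Rv - v` is an integer vector of norm at most `‖R - 1‖ ‖v‖ < 1`,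
hence zero. So `R` fixes every vertex, and therefore every difference `2 αᵢ eᵢ` of two vertices
that differ only in the sign of their `i`-th coordinate: `R` fixes the standard basis.
-/

def boxVertices {ι : Type*} (a : ι → ℝ) : Set (ι → ℝ) :=
  {v | ∀ i, v i = a i ∨ v i = -a i}

theorem sq_eq_of_mem_boxVertices {ι : Type*} {a v : ι → ℝ} (hv : v ∈ boxVertices a) (i : ι) :
    v i ^ 2 = a i ^ 2 := by
  rcases hv i with h | h <;> simp [h]

theorem norm_toLp_of_mem_boxVertices {ι : Type*} [Fintype ι] {a v : ι → ℝ}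
    (hv : v ∈ boxVertices a) : ‖WithLp.toLp 2 v‖ = Real.sqrt (∑ i, a i ^ 2) := by
  simp [EuclideanSpace.norm_eq, sq_eq_of_mem_boxVertices hv]

theorem toLp_mem_intLattice_of_mem_boxVertices {d : ℕ} {α : Fin d → ℤ} {v : Fin d → ℝ}
    (hv : v ∈ boxVertices fun i => (α i : ℝ)) : WithLp.toLp 2 v ∈ intLattice d := by
  intro i
  rcases hv i with h | h
  · exact ⟨α i, h⟩
  · exact ⟨-α i, by simp [h]⟩

theorem sub_mem_intLattice {d : ℕ} {x y : EuclideanSpace ℝ (Fin d)} (hx : x ∈ intLattice d)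
    (hy : y ∈ intLattice d) : x - y ∈ intLattice d := by
  intro i
  obtain ⟨m, hm⟩ := hx i
  obtain ⟨n, hn⟩ := hy i
  exact ⟨m - n, by simp [hm, hn]⟩

theorem eq_zero_of_mem_intLattice_of_norm_lt_one {d : ℕ} {w : EuclideanSpace ℝ (Fin d)}
    (hw : w ∈ intLattice d) (hlt : ‖w‖ < 1) : w = 0 := by
  ext i
  obtain ⟨n, hn⟩ := hw i
  have hn_abs : |(n : ℝ)| < 1 := by
    rw [← hn, ← Real.norm_eq_abs]
    exact (PiLp.norm_apply_le w i).trans_lt hlt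
  have : n = 0 := Int.abs_lt_one_iff.mp (by exact_mod_cast hn_abs)
  simp [hn, this]

theorem toEuclideanLin_apply_eq_self_of_mem_intLattice {d : ℕ} {R : Matrix (Fin d) (Fin d) ℝ}
    {v : EuclideanSpace ℝ (Fin d)} (hv : v ∈ intLattice d)
    (hRv : Matrix.toEuclideanLin R v ∈ intLattice d) (hsmall : matOpNorm (R - 1) * ‖v‖ < 1) :
    Matrix.toEuclideanLin R v = v := by
  have hdiff : Matrix.toEuclideanLin R v - v = Matrix.toEuclideanCLM (𝕜 := ℝ) (R - 1) v := by
    simp [map_sub, ← Matrix.coe_toEuclideanCLM_eq_toEuclideanLin]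
  have hnorm : ‖Matrix.toEuclideanLin R v - v‖ < 1 := by
    rw [hdiff]
    exact (ContinuousLinearMap.le_opNorm _ v).trans_lt hsmall
  exact sub_eq_zero.mp (eq_zero_of_mem_intLattice_of_norm_lt_one (sub_mem_intLattice hRv hv) hnorm)

theorem Matrix.eq_one_of_mulVec_eq_self_of_mem_boxVertices {ι : Type*} [Fintype ι]
    [DecidableEq ι] {a : ι → ℝ} (ha : ∀ i, a i ≠ 0) {R : Matrix ι ι ℝ}
    (hfix : ∀ v ∈ boxVertices a, R *ᵥ v = v) : R = 1 := by
  have hcol : ∀ i, R *ᵥ Pi.single i 1 = Pi.single i 1 := by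
    intro i
    set v' := Function.update a i (-a i)
    have hv' : v' ∈ boxVertices a := fun j => by
      rcases eq_or_ne j i with rfl | hj <;> simp [v', *]
    have hsub : a - v' = (2 * a i) • Pi.single i 1 := by
      ext j
      rcases eq_or_ne j i with rfl | hj
      · simp [v', two_mul]
      · simp [v', hj]
    have h : (2 * a i) • (R *ᵥ Pi.single i 1) = (2 * a i) • Pi.single i 1 := by
      rw [← mulVec_smul, ← hsub, mulVec_sub, hfix a fun j => Or.inl rfl, hfix v' hv']
    exact smul_right_injective _ (mul_ne_zero two_ne_zero (ha i)) h
  ext j i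
  simpa [mulVec_single_one, one_apply, Pi.single_apply] using congrFun (hcol i) j

theorem rotation_preserving_vertices_trivial_general (d : ℕ)
    (α : Fin d → ℤ) (hα : ∀ i, 1 ≤ α i)
    (R : Matrix (Fin d) (Fin d) ℝ)
    (hsmall : matOpNorm (R - 1) * Real.sqrt (∑ i, (α i : ℝ) ^ 2) < 1)
    (hvert : ∀ v : EuclideanSpace ℝ (Fin d),
      (∀ i, v i = (α i : ℝ) ∨ v i = -(α i : ℝ)) →
      Matrix.toEuclideanLin R v ∈ intLattice d) :
    R = 1 := by
  refine Matrix.eq_one_of_mulVec_eq_self_of_mem_boxVertices (a := fun i => (α i : ℝ))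
    (fun i => by have := hα i; positivity) fun v hv => ?_
  have hfix := toEuclideanLin_apply_eq_self_of_mem_intLattice
    (toLp_mem_intLattice_of_mem_boxVertices hv) (hvert _ hv)
    (by rwa [norm_toLp_of_mem_boxVertices hv])
  simpa using congrArg WithLp.ofLp hfix

/-- Small rotations mapping all vertices of an integer box to lattice points are trivial. -/
theorem rotation_preserving_vertices_trivial (d : ℕ) (hd : 1 ≤ d)
    (α : Fin d → ℤ) (hα : ∀ i, 1 ≤ α i)
    (R : Matrix (Fin d) (Fin d) ℝ) (hR : Rᵀ * R = 1)
    (hsmall : matOpNorm (R - 1) * Real.sqrt (∑ i, (α i : ℝ) ^ 2) < 1)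
    (hvert : ∀ v : EuclideanSpace ℝ (Fin d),
      (∀ i, v i = (α i : ℝ) ∨ v i = -(α i : ℝ)) →
      Matrix.toEuclideanLin R v ∈ intLattice d) :
    R = 1 :=
  rotation_preserving_vertices_trivial_general d α hα R hsmall hvert
end
end

section
/- Let d ≥ 1 and let α : Fin d → ℤ with α_1 ≥ α_2 ≥ … ≥ α_d ≥ 1, and let K₀ = {x ∈ ℝ^d : |x_i| ≤ α_i for all i} be the integer box. There exists δ > 0 such that for every d×d real special orthogonal matrix R (orthogonal with determinant 1) with 0 < ‖R − I‖ < δ, the strict inequality G(R·K₀) < ∏_{i=1}^d ⌊2/λ_i(R·K₀) + 1⌋ holds, where R·K₀ = {Rx : x ∈ K₀}. (Strict local stability of the Betke–Henk–Wills inequality at the critical configuration of an integer box.) -/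
open scoped Pointwise Matrix

noncomputable section

open scoped Matrix.Norms.L2Operator

namespace BHW

variable {d : ℕ}

lemma coord_le_norm (x : EuclideanSpace ℝ (Fin d)) (i : Fin d) : |x i| ≤ ‖x‖ := by
  rw [EuclideanSpace.norm_eq]
  have h1 : |x i| = Real.sqrt (‖x i‖ ^ 2) := by
    rw [Real.sqrt_sq_eq_abs]; simp
  rw [h1]
  apply Real.sqrt_le_sqrt
  exact Finset.single_le_sum (f := fun i => ‖x i‖ ^ 2) (fun j _ => sq_nonneg _) (Finset.mem_univ i)

lemma norm_le_sqrt_mul {x : EuclideanSpace ℝ (Fin d)} {C : ℝ} (hC : 0 ≤ C)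
    (h : ∀ i, |x i| ≤ C) : ‖x‖ ≤ Real.sqrt d * C := by
  rw [EuclideanSpace.norm_eq]
  have : ∑ i, ‖x i‖ ^ 2 ≤ d * C ^ 2 := by
    calc ∑ i, ‖x i‖ ^ 2 ≤ ∑ _i : Fin d, C ^ 2 := by
          refine Finset.sum_le_sum fun i _ => ?_
          have := h i
          rw [Real.norm_eq_abs]
          nlinarith [abs_nonneg (x i)]
      _ = d * C ^ 2 := by simp [mul_comm]
  calc Real.sqrt (∑ i, ‖x i‖ ^ 2) ≤ Real.sqrt (d * C ^ 2) := Real.sqrt_le_sqrt this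
    _ = Real.sqrt d * C := by
        rw [Real.sqrt_mul (by positivity), Real.sqrt_sq hC]

lemma toELin_coord (A : Matrix (Fin d) (Fin d) ℝ) (x : EuclideanSpace ℝ (Fin d)) (k : Fin d) :
    (Matrix.toEuclideanLin A x) k = ∑ j, A k j * x j := by
  change (A *ᵥ x) k = _
  simp [Matrix.mulVec, dotProduct]

lemma toELin_le_opNorm (A : Matrix (Fin d) (Fin d) ℝ) (x : EuclideanSpace ℝ (Fin d)) :
    ‖Matrix.toEuclideanLin A x‖ ≤ ‖A‖ * ‖x‖ :=
  (Matrix.toEuclideanCLM (𝕜 := ℝ) A).le_opNorm x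

lemma toELin_comp (A B : Matrix (Fin d) (Fin d) ℝ) (x : EuclideanSpace ℝ (Fin d)) :
    Matrix.toEuclideanLin A (Matrix.toEuclideanLin B x) = Matrix.toEuclideanLin (A * B) x :=
  (congrArg (fun f => f x) (map_mul (Matrix.toEuclideanCLM (𝕜 := ℝ)) A B)).symm

lemma toELin_one (x : EuclideanSpace ℝ (Fin d)) :
    Matrix.toEuclideanLin (1 : Matrix (Fin d) (Fin d) ℝ) x = x :=
  congrArg (fun f => f x) (map_one (Matrix.toEuclideanCLM (𝕜 := ℝ) (n := Fin d)))

lemma entry_abs_le (A : Matrix (Fin d) (Fin d) ℝ) (i j : Fin d) : |A i j| ≤ ‖A‖ := by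
  have h1 : A i j = (Matrix.toEuclideanLin A (EuclideanSpace.single j (1:ℝ))) i := by
    rw [toELin_coord]
    simp [EuclideanSpace.single_apply, mul_ite]
  rw [h1]
  calc |(Matrix.toEuclideanLin A (EuclideanSpace.single j (1:ℝ))) i|
      ≤ ‖Matrix.toEuclideanLin A (EuclideanSpace.single j (1:ℝ))‖ := coord_le_norm _ _
    _ ≤ ‖A‖ * ‖EuclideanSpace.single j (1:ℝ)‖ := toELin_le_opNorm _ _
    _ = ‖A‖ := by rw [EuclideanSpace.norm_single]; simp

lemma norm_one_mat (hd : 1 ≤ d) : ‖(1 : Matrix (Fin d) (Fin d) ℝ)‖ = 1 := by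
  haveI : Nonempty (Fin d) := ⟨⟨0, hd⟩⟩
  haveI : Nontrivial (EuclideanSpace ℝ (Fin d)) := by infer_instance
  rw [Matrix.cstar_norm_def, map_one, ContinuousLinearMap.one_def]
  exact ContinuousLinearMap.norm_id

lemma norm_orth (hd : 1 ≤ d) {A : Matrix (Fin d) (Fin d) ℝ} (h : Aᵀ * A = 1) : ‖A‖ = 1 := by
  have hH : Aᴴ = Aᵀ := by ext i j; simp [Matrix.conjTranspose_apply]
  have h2 : ‖A‖ * ‖A‖ = 1 := by
    rw [← Matrix.l2_opNorm_conjTranspose_mul_self, hH, h, norm_one_mat hd]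
  nlinarith [norm_nonneg (A : Matrix (Fin d) (Fin d) ℝ), h2]

lemma norm_transpose (A : Matrix (Fin d) (Fin d) ℝ) : ‖Aᵀ‖ = ‖A‖ := by
  have hH : Aᴴ = Aᵀ := by ext i j; simp [Matrix.conjTranspose_apply]
  rw [← hH, Matrix.l2_opNorm_conjTranspose]

lemma isometry_orth (hd : 1 ≤ d) {A : Matrix (Fin d) (Fin d) ℝ} (h : Aᵀ * A = 1)
    (x : EuclideanSpace ℝ (Fin d)) : ‖Matrix.toEuclideanLin A x‖ = ‖x‖ := by
  apply le_antisymm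
  · calc ‖Matrix.toEuclideanLin A x‖ ≤ ‖A‖ * ‖x‖ := toELin_le_opNorm _ _
      _ = ‖x‖ := by rw [norm_orth hd h, one_mul]
  · calc ‖x‖ = ‖Matrix.toEuclideanLin Aᵀ (Matrix.toEuclideanLin A x)‖ := by
          rw [toELin_comp, h, toELin_one]
      _ ≤ ‖Aᵀ‖ * ‖Matrix.toEuclideanLin A x‖ := toELin_le_opNorm _ _
      _ = ‖Matrix.toEuclideanLin A x‖ := by rw [norm_transpose, norm_orth hd h, one_mul]

lemma mem_image_box {R : Matrix (Fin d) (Fin d) ℝ} (hO : Rᵀ * R = 1)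
    (α : Fin d → ℤ) (y : EuclideanSpace ℝ (Fin d)) :
    y ∈ (⇑(Matrix.toEuclideanLin R) '' {x : EuclideanSpace ℝ (Fin d) | ∀ i, |x i| ≤ (α i : ℝ)})
      ↔ ∀ k, |(Matrix.toEuclideanLin Rᵀ y) k| ≤ (α k : ℝ) := by
  have hRR : R * Rᵀ = 1 := mul_eq_one_comm.mp hO
  constructor
  · rintro ⟨x, hx, rfl⟩ k
    rw [toELin_comp, hO, toELin_one]
    exact hx k
  · intro h
    exact ⟨Matrix.toEuclideanLin Rᵀ y, h, by rw [toELin_comp, hRR, toELin_one]⟩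

lemma mem_smul_image_box {R : Matrix (Fin d) (Fin d) ℝ} (hO : Rᵀ * R = 1)
    (α : Fin d → ℤ) {lam : ℝ} (hlam : 0 < lam) (z : EuclideanSpace ℝ (Fin d)) :
    z ∈ lam • (⇑(Matrix.toEuclideanLin R) ''
        {x : EuclideanSpace ℝ (Fin d) | ∀ i, |x i| ≤ (α i : ℝ)})
      ↔ ∀ k, |(Matrix.toEuclideanLin Rᵀ z) k| ≤ lam * (α k : ℝ) := by
  rw [Set.mem_smul_set_iff_inv_smul_mem₀ (ne_of_gt hlam), mem_image_box hO]
  have hmap : Matrix.toEuclideanLin Rᵀ (lam⁻¹ • z) = lam⁻¹ • Matrix.toEuclideanLin Rᵀ z :=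
    map_smul _ _ _
  rw [hmap]
  have hc : ∀ k, (lam⁻¹ • Matrix.toEuclideanLin Rᵀ z) k
      = lam⁻¹ * (Matrix.toEuclideanLin Rᵀ z) k := fun k => rfl
  have key : ∀ u a : ℝ, (|lam⁻¹ * u| ≤ a ↔ |u| ≤ lam * a) := by
    intro u a
    rw [abs_mul, abs_inv, abs_of_pos hlam, inv_mul_le_iff₀ hlam]
  constructor
  · intro h k
    exact (key _ _).mp (by rw [← hc k]; exact h k)
  · intro h k
    rw [hc k]
    exact (key _ _).mpr (h k)

/-- inclusion of integer vectors -/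
def ivec (z : Fin d → ℤ) : EuclideanSpace ℝ (Fin d) := WithLp.toLp 2 (fun i => (z i : ℝ))

lemma ivec_inj : Function.Injective (ivec (d := d)) := by
  intro a b hab
  funext i
  have : ((a i : ℝ)) = (b i : ℝ) := congrArg (fun x : EuclideanSpace ℝ (Fin d) => x i) hab
  exact_mod_cast this

lemma mem_intLattice_iff (x : EuclideanSpace ℝ (Fin d)) :
    x ∈ intLattice d ↔ ∃ z : Fin d → ℤ, ivec z = x := by
  constructor
  · intro hx
    refine ⟨fun i => Classical.choose (hx i), ?_⟩
    ext i
    exact (Classical.choose_spec (hx i)).symm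
  · rintro ⟨z, rfl⟩ i
    exact ⟨z i, rfl⟩

lemma exists_big_row {B : Matrix (Fin d) (Fin d) ℝ} (hBO : Bᵀ * B = 1)
    (hpos : 0 < ‖B - 1‖) (hlt : ‖B - 1‖ < 1) (α : Fin d → ℤ) (hα : ∀ i, 1 ≤ α i) :
    ∃ k, (α k : ℝ) < ∑ j, |B k j| * (α j : ℝ) := by
  by_contra hcon
  push_neg at hcon
  have hαpos : ∀ j, (0:ℝ) < (α j : ℝ) := fun j => by exact_mod_cast hα j
  have hcol : ∀ j, ∑ k, (B k j) ^ 2 = 1 := by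
    intro j
    have h1 : (Bᵀ * B) j j = (1 : Matrix (Fin d) (Fin d) ℝ) j j := by rw [hBO]
    rw [Matrix.mul_apply, Matrix.one_apply_eq] at h1
    calc ∑ k, (B k j) ^ 2 = ∑ k, Bᵀ j k * B k j := by
          refine Finset.sum_congr rfl fun k _ => ?_
          rw [Matrix.transpose_apply]; ring
      _ = 1 := h1
  have hentry : ∀ k j, |B k j| ≤ 1 := by
    intro k j
    have hsq : (B k j) ^ 2 ≤ 1 := by
      rw [← hcol j]
      exact Finset.single_le_sum (f := fun k => (B k j)^2) (fun m _ => sq_nonneg _)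
        (Finset.mem_univ k)
    nlinarith [abs_nonneg (B k j), sq_abs (B k j)]
  have hsq_le : ∀ k j, (B k j) ^ 2 ≤ |B k j| := by
    intro k j
    calc (B k j) ^ 2 = |B k j| * |B k j| := by rw [← sq_abs]; ring
      _ ≤ |B k j| * 1 := mul_le_mul_of_nonneg_left (hentry k j) (abs_nonneg _)
      _ = |B k j| := mul_one _
  have hS1 : ∑ j, (∑ k, |B k j|) * (α j : ℝ) ≤ ∑ k, (α k : ℝ) := by
    calc ∑ j, (∑ k, |B k j|) * (α j : ℝ) = ∑ j, ∑ k, |B k j| * (α j : ℝ) := by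
          refine Finset.sum_congr rfl fun j _ => ?_; rw [Finset.sum_mul]
      _ = ∑ k, ∑ j, |B k j| * (α j : ℝ) := Finset.sum_comm
      _ ≤ ∑ k, (α k : ℝ) := Finset.sum_le_sum fun k _ => hcon k
  have hS2 : ∑ j, (∑ k, (B k j) ^ 2) * (α j : ℝ) = ∑ j, (α j : ℝ) := by
    refine Finset.sum_congr rfl fun j _ => ?_
    rw [hcol j, one_mul]
  have hle : ∑ j, (∑ k, (B k j) ^ 2) * (α j : ℝ) ≤ ∑ j, (∑ k, |B k j|) * (α j : ℝ) := by
    refine Finset.sum_le_sum fun j _ => ?_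
    apply mul_le_mul_of_nonneg_right _ (le_of_lt (hαpos j))
    exact Finset.sum_le_sum fun k _ => hsq_le k j
  have heq : ∑ j, (∑ k, |B k j|) * (α j : ℝ) = ∑ j, (∑ k, (B k j) ^ 2) * (α j : ℝ) := by
    rw [hS2]; linarith
  have hzero : ∑ j, (∑ k, (|B k j| - (B k j) ^ 2)) * (α j : ℝ) = 0 := by
    have expand : ∀ j, (∑ k, (|B k j| - (B k j) ^ 2)) * (α j : ℝ)
        = (∑ k, |B k j|) * (α j : ℝ) - (∑ k, (B k j) ^ 2) * (α j : ℝ) := by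
      intro j; rw [Finset.sum_sub_distrib]; ring
    rw [Finset.sum_congr rfl fun j _ => expand j, Finset.sum_sub_distrib, heq, sub_self]
  have hallzero : ∀ j k, |B k j| = (B k j) ^ 2 := by
    intro j k
    have hnn : ∀ j ∈ Finset.univ, (0:ℝ) ≤ (∑ k, (|B k j| - (B k j) ^ 2)) * (α j : ℝ) := by
      intro j _
      apply mul_nonneg _ (le_of_lt (hαpos j))
      exact Finset.sum_nonneg fun k _ => by linarith [hsq_le k j]
    have hj := (Finset.sum_eq_zero_iff_of_nonneg hnn).mp hzero j (Finset.mem_univ j)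
    have hcoeff : ∑ k, (|B k j| - (B k j) ^ 2) = 0 := by
      rcases mul_eq_zero.mp hj with h | h
      · exact h
      · exact absurd h (ne_of_gt (hαpos j))
    have := (Finset.sum_eq_zero_iff_of_nonneg
      (fun k _ => by linarith [hsq_le k j])).mp hcoeff k (Finset.mem_univ k)
    linarith
  have hdiag : ∀ j, B j j = 1 := by
    intro j
    have h1 : |B j j - 1| < 1 := by
      have : B j j - 1 = (B - 1) j j := by
        simp [Matrix.sub_apply, Matrix.one_apply_eq]
      rw [this]
      exact lt_of_le_of_lt (entry_abs_le _ _ _) hlt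
    have h2 : |B j j| = (B j j) ^ 2 := hallzero j j
    have h3 : 0 < B j j := by
      cases' abs_lt.mp h1 with hl hr
      linarith
    rw [abs_of_pos h3] at h2
    have h4 : B j j * (B j j - 1) = 0 := by nlinarith
    rcases mul_eq_zero.mp h4 with h | h
    · exact absurd h (ne_of_gt h3)
    · linarith
  have hoff : ∀ k j, k ≠ j → B k j = 0 := by
    intro k j hkj
    have h2 : ∑ m ∈ Finset.univ.erase j, (B m j) ^ 2 = 0 := by
      rw [Finset.sum_erase_eq_sub (Finset.mem_univ j)]
      rw [hcol j, hdiag j]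
      norm_num
    have := (Finset.sum_eq_zero_iff_of_nonneg
      (fun m _ => sq_nonneg (B m j))).mp h2 k (Finset.mem_erase.mpr ⟨hkj, Finset.mem_univ k⟩)
    exact pow_eq_zero_iff (by norm_num) |>.mp this
  have hB1 : B = 1 := by
    ext k j
    by_cases hkj : k = j
    · subst hkj; rw [hdiag k, Matrix.one_apply_eq]
    · rw [hoff k j hkj, Matrix.one_apply_ne hkj]
  rw [hB1] at hpos
  simp at hpos

lemma euclid_expand (x : EuclideanSpace ℝ (Fin d)) :
    x = ∑ j, x j • EuclideanSpace.single j (1:ℝ) := by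
  ext i
  have : (∑ j, x j • EuclideanSpace.single j (1:ℝ)) i
      = ∑ j, (x j • EuclideanSpace.single j (1:ℝ)) i :=
    by rw [WithLp.ofLp_sum]; exact Finset.sum_apply i Finset.univ _
  rw [this]
  simp [EuclideanSpace.single_apply]

lemma singles_linIndep :
    LinearIndependent ℝ (fun j : Fin d => EuclideanSpace.single j (1:ℝ)) := by
  have h := (EuclideanSpace.basisFun (Fin d) ℝ).toBasis.linearIndependent
  have hcoe : ⇑(EuclideanSpace.basisFun (Fin d) ℝ).toBasis
      = fun j : Fin d => EuclideanSpace.single j (1:ℝ) := by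
    funext j
    rw [OrthonormalBasis.coe_toBasis, EuclideanSpace.basisFun_apply]
  rwa [hcoe] at h

end BHW

open BHW

set_option maxHeartbeats 2000000 in
/-- Strict local stability of the Betke–Henk–Wills inequality at an integer box:
there is `δ > 0` such that for every special orthogonal `R` with `0 < ‖R - I‖ < δ`,
`G(R·K₀) < ∏ i ⌊2/λ_i(R·K₀) + 1⌋`. -/
theorem bhw_strict_local_stability (d : ℕ) (hd : 1 ≤ d)
    (α : Fin d → ℤ) (hmono : ∀ i j : Fin d, i ≤ j → α j ≤ α i) (hα : ∀ i, 1 ≤ α i) :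
    ∃ δ > (0 : ℝ), ∀ R : Matrix (Fin d) (Fin d) ℝ, Rᵀ * R = 1 → R.det = 1 →
      0 < matOpNorm (R - 1) → matOpNorm (R - 1) < δ →
      (latticeCount
          (⇑(Matrix.toEuclideanLin R) ''
            {x : EuclideanSpace ℝ (Fin d) | ∀ i, |x i| ≤ (α i : ℝ)}) : ℤ) <
        ∏ i : Fin d,
          ⌊2 / succMin
              (⇑(Matrix.toEuclideanLin R) ''
                {x : EuclideanSpace ℝ (Fin d) | ∀ j, |x j| ≤ (α j : ℝ)}) (i.1 + 1) + 1⌋ := by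
  classical
  set i0 : Fin d := ⟨0, hd⟩ with hi0
  set A1 : ℝ := (α i0 : ℝ) with hA1def
  have hA1 : 1 ≤ A1 := by rw [hA1def]; exact_mod_cast hα i0
  have hAub : ∀ k, (α k : ℝ) ≤ A1 := by
    intro k
    rw [hA1def]
    exact_mod_cast hmono i0 k (by simp [hi0, Fin.le_def])
  have hαpos : ∀ k, (0:ℝ) < (α k : ℝ) := fun k => by exact_mod_cast hα k
  have hα1 : ∀ k, (1:ℝ) ≤ (α k : ℝ) := fun k => by exact_mod_cast hα k
  set sd : ℝ := Real.sqrt d with hsddef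
  have hsd1 : 1 ≤ sd := by
    rw [hsddef, show (1:ℝ) = Real.sqrt 1 by rw [Real.sqrt_one]]
    apply Real.sqrt_le_sqrt
    exact_mod_cast hd
  have hsdpos : 0 < sd := lt_of_lt_of_le one_pos hsd1
  refine ⟨1 / (sd * A1 * (4 * A1 + 1)), by positivity, ?_⟩
  intro R hO hdet hpos hlt
  -- basic notation
  set δ : ℝ := 1 / (sd * A1 * (4 * A1 + 1)) with hδdef
  have hδpos : 0 < δ := by positivity
  set ε : ℝ := ‖R - 1‖ with hεdef
  have hpos' : 0 < ε := hpos
  have hlt' : ε < δ := hlt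
  have hδ5 : δ ≤ 1 / 5 := by
    rw [hδdef]
    rw [div_le_div_iff₀ (by positivity) (by norm_num)]
    have hsdA1 : 1 ≤ sd * A1 := by nlinarith
    nlinarith [mul_le_mul_of_nonneg_right hsdA1 (show (0:ℝ) ≤ 4*A1+1 by linarith)]
  have hε1 : ε < 1 := by
    calc ε < δ := hlt'
      _ ≤ 1/5 := hδ5
      _ < 1 := by norm_num
  have hεnum : ε * (sd * A1) < 1 / (4 * A1 + 1) := by
    have h1 : ε * (sd * A1) < δ * (sd * A1) := by
      apply mul_lt_mul_of_pos_right hlt' (by positivity)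
    have h2 : δ * (sd * A1) = 1 / (4 * A1 + 1) := by
      rw [hδdef]; field_simp
    linarith
  have hRR : R * Rᵀ = 1 := mul_eq_one_comm.mp hO
  have hRT : (Rᵀ)ᵀ * Rᵀ = 1 := by rwa [Matrix.transpose_transpose]
  have hRT1 : ‖Rᵀ - 1‖ = ε := by
    rw [hεdef, show Rᵀ - 1 = (R - 1)ᵀ by rw [Matrix.transpose_sub, Matrix.transpose_one]]
    exact norm_transpose _
  have hnormR : ‖R‖ = 1 := norm_orth hd hO
  set K : Set (EuclideanSpace ℝ (Fin d)) :=
    ⇑(Matrix.toEuclideanLin R) '' {x : EuclideanSpace ℝ (Fin d) | ∀ i, |x i| ≤ (α i : ℝ)}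
    with hKdef
  -- coordinate difference estimate : |z k - (toELin Rᵀ z) k| ≤ ε * ‖z‖
  have hdiff : ∀ (z : EuclideanSpace ℝ (Fin d)) (k : Fin d),
      |z k - (Matrix.toEuclideanLin Rᵀ z) k| ≤ ε * ‖z‖ := by
    intro z k
    have h1 : z - Matrix.toEuclideanLin Rᵀ z = Matrix.toEuclideanLin (1 - Rᵀ) z := by
      rw [map_sub]
      simp only [LinearMap.sub_apply]
      rw [toELin_one]
    have h2 : z k - (Matrix.toEuclideanLin Rᵀ z) k = (z - Matrix.toEuclideanLin Rᵀ z) k := rfl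
    rw [h2, h1]
    calc |(Matrix.toEuclideanLin (1 - Rᵀ) z) k| ≤ ‖Matrix.toEuclideanLin (1 - Rᵀ) z‖ :=
          coord_le_norm _ _
      _ ≤ ‖(1 - Rᵀ : Matrix (Fin d) (Fin d) ℝ)‖ * ‖z‖ := toELin_le_opNorm _ _
      _ = ε * ‖z‖ := by rw [norm_sub_rev, hRT1]
  -- norm preservation for z
  have hnormz : ∀ z : EuclideanSpace ℝ (Fin d), ‖Matrix.toEuclideanLin Rᵀ z‖ = ‖z‖ :=
    fun z => isometry_orth hd hRT z
  ------------------------------------------------------------------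
  -- STEP 1 : each successive-minimum floor factor equals 2 α i + 1
  ------------------------------------------------------------------
  have hfactor : ∀ i : Fin d, ⌊2 / succMin K (i.1 + 1) + 1⌋ = 2 * α i + 1 := by
    intro i
    set a : ℝ := (α i : ℝ) with hadef
    have ha1 : 1 ≤ a := hα1 i
    have hapos : 0 < a := hαpos i
    have haA1 : a ≤ A1 := hAub i
    set P : Set ℝ := {lam : ℝ | 0 < lam ∧
      (i.1 + 1) ≤ Module.finrank ℝ (Submodule.span ℝ ((lam • K) ∩ intLattice d))} with hPdef
    have hsm : succMin K (i.1 + 1) = sInf P := rfl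
    -- upper bound : a⁻¹ ∈ P
    have hmem_up : a⁻¹ ∈ P := by
      constructor
      · positivity
      · -- the singles e_j , j ≤ i, lie in (a⁻¹ • K) ∩ lattice
        have hsingle_mem : ∀ j : Fin d, j ≤ i →
            EuclideanSpace.single j (1:ℝ) ∈ (a⁻¹ • K) ∩ intLattice d := by
          intro j hj
          constructor
          · rw [hKdef, mem_smul_image_box hO α (by positivity)]
            intro k
            have hcoord : (Matrix.toEuclideanLin Rᵀ (EuclideanSpace.single j (1:ℝ))) k
                = R j k := by
              rw [toELin_coord]
              simp [EuclideanSpace.single_apply, Matrix.transpose_apply, mul_ite]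
            rw [hcoord]
            by_cases hkj : k = j
            · subst hkj
              have h1 : |R k k| ≤ 1 := by
                calc |R k k| ≤ ‖R‖ := entry_abs_le _ _ _
                  _ = 1 := hnormR
              have h2 : a ≤ (α k : ℝ) := by rw [hadef]; exact_mod_cast hmono k i hj
              calc |R k k| ≤ 1 := h1
                _ ≤ a⁻¹ * (α k : ℝ) := by
                    rw [show (1:ℝ) = a⁻¹ * a by field_simp]
                    apply mul_le_mul_of_nonneg_left h2 (by positivity)
            · have h1 : |R j k| ≤ ε := by
                have : R j k = (R - 1) j k := by
                  simp [Matrix.sub_apply, Matrix.one_apply_ne (Ne.symm (by simpa using hkj))]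
                rw [this, hεdef]
                exact entry_abs_le _ _ _
              have h2 : a * ε < 1 := by
                calc a * ε ≤ A1 * ε := mul_le_mul_of_nonneg_right haA1 (le_of_lt hpos')
                  _ ≤ sd * A1 * ε := by
                      apply mul_le_mul_of_nonneg_right _ (le_of_lt hpos')
                      nlinarith [mul_le_mul_of_nonneg_right hsd1 (show (0:ℝ) ≤ A1 by linarith)]
                  _ = ε * (sd * A1) := by ring
                  _ < 1 / (4*A1+1) := hεnum
                  _ ≤ 1 := by rw [div_le_one (by positivity)]; nlinarith
              calc |R j k| ≤ ε := h1
                _ ≤ a⁻¹ * (α k : ℝ) := by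
                    rw [show ε = a⁻¹ * (a * ε) by field_simp]
                    apply mul_le_mul_of_nonneg_left _ (by positivity)
                    calc a * ε ≤ 1 := le_of_lt h2
                      _ ≤ (α k : ℝ) := hα1 k
          · intro m
            by_cases hmj : m = j
            · subst hmj
              exact ⟨1, by simp [EuclideanSpace.single_apply]⟩
            · exact ⟨0, by simp [EuclideanSpace.single_apply, hmj]⟩
        -- linear independence gives the rank bound
        have hle : i.1 + 1 ≤ d := i.isLt
        set g : Fin (i.1 + 1) → EuclideanSpace ℝ (Fin d) :=
          fun t => EuclideanSpace.single (Fin.castLE hle t) (1:ℝ) with hgdef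
        have hgind : LinearIndependent ℝ g :=
          (singles_linIndep (d := d)).comp (Fin.castLE hle) (Fin.castLE_injective hle)
        have hrange : Set.range g ⊆ (a⁻¹ • K) ∩ intLattice d := by
          rintro _ ⟨t, rfl⟩
          apply hsingle_mem
          simp [Fin.le_def, Fin.castLE]
          omega
        calc i.1 + 1 = Fintype.card (Fin (i.1 + 1)) := by simp
          _ = Module.finrank ℝ (Submodule.span ℝ (Set.range g)) :=
              (finrank_span_eq_card hgind).symm
          _ ≤ Module.finrank ℝ (Submodule.span ℝ ((a⁻¹ • K) ∩ intLattice d)) :=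
              Submodule.finrank_mono (Submodule.span_mono hrange)
    -- lower bound : every lam ∈ P exceeds (a + 4⁻¹)⁻¹
    have hlow : ∀ lam ∈ P, (a + 4⁻¹)⁻¹ ≤ lam := by
      rintro lam ⟨hlam, hrank⟩
      by_contra hcon
      push_neg at hcon
      have hlamle : lam ≤ (a + 4⁻¹)⁻¹ := le_of_lt hcon
      -- every lattice point of lam • K has zero coordinates ≥ i
      have hvanish : ∀ z ∈ (lam • K) ∩ intLattice d, ∀ k : Fin d, i ≤ k → z k = 0 := by
        rintro z ⟨hzK, hzL⟩ k hik
        obtain ⟨w, rfl⟩ := (mem_intLattice_iff z).mp hzL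
        rw [hKdef, mem_smul_image_box hO α hlam] at hzK
        set u := Matrix.toEuclideanLin Rᵀ (ivec w) with hudef
        have hαk : (α k : ℝ) ≤ a := by rw [hadef]; exact_mod_cast hmono i k hik
        have hnu : ‖ivec w‖ ≤ sd * (lam * A1) := by
          rw [← hnormz (ivec w), ← hudef]
          apply norm_le_sqrt_mul (by positivity)
          intro m
          calc |u m| ≤ lam * (α m : ℝ) := hzK m
            _ ≤ lam * A1 := mul_le_mul_of_nonneg_left (hAub m) (le_of_lt hlam)
        have hlam1 : lam ≤ 1 := by
          calc lam ≤ (a + 4⁻¹)⁻¹ := hlamle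
            _ ≤ 1 := by rw [inv_le_one_iff₀]; right; linarith
        have hz1 : |(ivec w) k| < 1 := by
          have h1 : |(ivec w) k| ≤ |u k| + |(ivec w) k - u k| := by
            have := abs_sub_abs_le_abs_sub ((ivec w) k) (u k)
            cases' abs_cases ((ivec w) k - u k) with h h <;>
              cases' abs_cases (u k) with h' h' <;> cases' abs_cases ((ivec w) k) with h'' h'' <;>
              linarith
          have h2 : |u k| ≤ lam * a := by
            calc |u k| ≤ lam * (α k : ℝ) := hzK k
              _ ≤ lam * a := mul_le_mul_of_nonneg_left hαk (le_of_lt hlam)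
          have h3 : |(ivec w) k - u k| ≤ ε * (sd * (lam * A1)) := by
            calc |(ivec w) k - u k| ≤ ε * ‖ivec w‖ := hdiff (ivec w) k
              _ ≤ ε * (sd * (lam * A1)) :=
                  mul_le_mul_of_nonneg_left hnu (le_of_lt hpos')
          have h4 : lam * a ≤ 1 - 1 / (4 * a + 1) := by
            have : lam * (a + 4⁻¹) ≤ 1 := by
              calc lam * (a + 4⁻¹) ≤ (a + 4⁻¹)⁻¹ * (a + 4⁻¹) := by
                    apply mul_le_mul_of_nonneg_right hlamle (by positivity)
                _ = 1 := by field_simp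
            rw [sub_div' (by positivity : (4*a+1 : ℝ) ≠ 0)]
            rw [le_div_iff₀ (by positivity)]
            nlinarith
          have h5 : ε * (sd * (lam * A1)) < 1 / (4 * a + 1) := by
            calc ε * (sd * (lam * A1)) ≤ ε * (sd * A1) := by
                  apply mul_le_mul_of_nonneg_left _ (le_of_lt hpos')
                  have : lam * A1 ≤ A1 := by nlinarith
                  nlinarith
              _ < 1 / (4 * A1 + 1) := hεnum
              _ ≤ 1 / (4 * a + 1) := by
                  apply div_le_div_of_nonneg_left (by norm_num) (by positivity)
                  linarith
          linarith
        have hwk1 : |w k| < 1 := by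
          have : |((w k : ℤ) : ℝ)| < 1 := hz1
          exact_mod_cast this
        have hwk : w k = 0 := by
          have := abs_lt.mp hwk1
          omega
        simp [ivec, hwk]
      -- hence the span has rank ≤ i.1 < i.1 + 1
      set F : Finset (EuclideanSpace ℝ (Fin d)) :=
        (Finset.univ.filter fun j : Fin d => j.1 < i.1).image
          (fun j => EuclideanSpace.single j (1:ℝ)) with hFdef
      have hsub : (lam • K) ∩ intLattice d ⊆
          (↑(Submodule.span ℝ ((F : Set (EuclideanSpace ℝ (Fin d))))) :
            Set (EuclideanSpace ℝ (Fin d))) := by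
        intro z hz
        have hexp := euclid_expand z
        have hzero : ∀ j : Fin d, ¬ (j.1 < i.1) → z j • EuclideanSpace.single j (1:ℝ) = 0 := by
          intro j hj
          have : i ≤ j := by
            rw [Fin.le_def]; omega
          rw [hvanish z hz j this, zero_smul]
        have hzsum : z = ∑ j ∈ Finset.univ.filter (fun j : Fin d => j.1 < i.1),
            z j • EuclideanSpace.single j (1:ℝ) := by
          conv_lhs => rw [euclid_expand z]
          rw [← Finset.sum_filter_add_sum_filter_not Finset.univ
            (fun j : Fin d => j.1 < i.1)
            (fun j => z j • EuclideanSpace.single j (1:ℝ))]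
          have h0 : ∑ j ∈ Finset.univ.filter (fun j : Fin d => ¬ j.1 < i.1),
              z j • EuclideanSpace.single j (1:ℝ) = 0 := by
            apply Finset.sum_eq_zero
            intro j hj
            exact hzero j (Finset.mem_filter.mp hj).2
          rw [h0, add_zero]
        rw [hzsum]
        apply Submodule.sum_mem
        intro j hj
        apply Submodule.smul_mem
        apply Submodule.subset_span
        rw [hFdef]
        simp only [Finset.coe_image, Set.mem_image]
        exact ⟨j, by simpa using hj, rfl⟩
      have hc1 : Module.finrank ℝ (Submodule.span ℝ ((lam • K) ∩ intLattice d))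
          ≤ Module.finrank ℝ (Submodule.span ℝ (↑F : Set (EuclideanSpace ℝ (Fin d)))) := by
        apply Submodule.finrank_mono
        rw [Submodule.span_le]
        exact hsub
      have hc2 : Module.finrank ℝ
          (Submodule.span ℝ (↑F : Set (EuclideanSpace ℝ (Fin d)))) ≤ F.card :=
        finrank_span_finset_le_card F
      have hc3 : F.card ≤ i.1 := by
        calc F.card ≤ (Finset.univ.filter fun j : Fin d => j.1 < i.1).card :=
              Finset.card_image_le
          _ ≤ i.1 := by
              have := Finset.card_le_card_of_injOn
                (f := fun j : Fin d => j.1)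
                (s := Finset.univ.filter fun j : Fin d => j.1 < i.1)
                (t := Finset.range i.1)
                (fun j hj => Finset.mem_range.mpr (Finset.mem_filter.mp hj).2)
                (fun a _ b _ hab => Fin.val_injective hab)
              simpa using this
      omega
    -- combine
    have hne : P.Nonempty := ⟨a⁻¹, hmem_up⟩
    have hbdd : BddBelow P := ⟨(a + 4⁻¹)⁻¹, hlow⟩
    have h1 : (a + 4⁻¹)⁻¹ ≤ sInf P := le_csInf hne hlow
    have h2 : sInf P ≤ a⁻¹ := csInf_le hbdd hmem_up
    have hlp : 0 < sInf P := lt_of_lt_of_le (by positivity) h1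
    rw [hsm]
    rw [Int.floor_eq_iff]
    have hinva : a * a⁻¹ = 1 := by field_simp
    have hinvb : ((a + 4⁻¹) * (a + 4⁻¹)⁻¹ : ℝ) = 1 := by field_simp
    constructor
    · push_cast
      have : 2 * a ≤ 2 / sInf P := by
        rw [le_div_iff₀ hlp]
        nlinarith
      linarith
    · push_cast
      have : 2 / sInf P ≤ 2 * a + 1/2 := by
        rw [div_le_iff₀ hlp]
        nlinarith
      linarith
  ------------------------------------------------------------------
  -- STEP 2 : the lattice point count is at most ∏ (2 α i + 1) - 1
  ------------------------------------------------------------------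
  set T : Finset (Fin d → ℤ) := Fintype.piFinset fun i => Finset.Icc (-α i) (α i) with hTdef
  have hTcard : (T.card : ℤ) = ∏ i : Fin d, (2 * α i + 1) := by
    rw [hTdef, Fintype.card_piFinset]
    push_cast
    apply Finset.prod_congr rfl
    intro i _
    rw [Int.card_Icc]
    have : (α i + 1 - -α i) = 2 * α i + 1 := by ring
    rw [this, Int.toNat_of_nonneg (by linarith [hα i])]
  -- the missing corner
  have hBO : (Rᵀ)ᵀ * Rᵀ = 1 := hRT
  obtain ⟨k, hk⟩ := exists_big_row hBO (by rw [hRT1]; exact hpos') (by rw [hRT1]; linarith) α hα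
  set v : Fin d → ℤ := fun j => if 0 ≤ Rᵀ k j then α j else -α j with hvdef
  have hvabs : ∀ j, |v j| ≤ α j := by
    intro j
    have hv : v j = if 0 ≤ Rᵀ k j then α j else -α j := rfl
    by_cases h : 0 ≤ Rᵀ k j
    · rw [hv, if_pos h, abs_of_nonneg (by linarith [hα j])]
    · rw [hv, if_neg h, abs_neg, abs_of_nonneg (by linarith [hα j])]
  have hvT : v ∈ T := by
    rw [hTdef, Fintype.mem_piFinset]
    intro j
    rw [Finset.mem_Icc]
    have := hvabs j
    rw [abs_le] at this
    exact this
  have hvcoord : (Matrix.toEuclideanLin Rᵀ (ivec v)) k = ∑ j, |Rᵀ k j| * (α j : ℝ) := by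
    rw [toELin_coord]
    apply Finset.sum_congr rfl
    intro j _
    have hv : (ivec v) j = ((if 0 ≤ Rᵀ k j then α j else -α j : ℤ) : ℝ) := rfl
    rw [hv]
    by_cases h : 0 ≤ Rᵀ k j
    · rw [if_pos h, abs_of_nonneg h]
    · rw [if_neg h, abs_of_neg (lt_of_not_ge h)]
      push_cast
      try ring
  have hvnot : ivec v ∉ K := by
    intro hmem
    rw [hKdef, mem_image_box hO] at hmem
    have h1 := hmem k
    rw [hvcoord] at h1
    have h2 : ∑ j, |Rᵀ k j| * (α j : ℝ) ≤ |∑ j, |Rᵀ k j| * (α j : ℝ)| := le_abs_self _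
    linarith [hk]
  -- inclusion into T.erase v
  have hincl : K ∩ intLattice d ⊆ ivec '' (↑(T.erase v) : Set (Fin d → ℤ)) := by
    rintro z ⟨hzK, hzL⟩
    obtain ⟨w, rfl⟩ := (mem_intLattice_iff z).mp hzL
    refine ⟨w, ?_, rfl⟩
    rw [Finset.coe_erase]
    constructor
    · -- w ∈ T
      rw [Finset.mem_coe, hTdef, Fintype.mem_piFinset]
      intro m
      rw [Finset.mem_Icc, ← abs_le]
      have hzK' := hzK
      rw [hKdef, mem_image_box hO] at hzK'
      set u := Matrix.toEuclideanLin Rᵀ (ivec w) with hudef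
      have hnu : ‖ivec w‖ ≤ sd * A1 := by
        rw [← hnormz (ivec w), ← hudef]
        apply norm_le_sqrt_mul (by positivity)
        intro m'
        calc |u m'| ≤ (α m' : ℝ) := hzK' m'
          _ ≤ A1 := hAub m'
      have h1 : |(ivec w) m| ≤ |u m| + |(ivec w) m - u m| := by
        cases' abs_cases ((ivec w) m - u m) with h h <;>
          cases' abs_cases (u m) with h' h' <;> cases' abs_cases ((ivec w) m) with h'' h'' <;>
          linarith
      have h2 : |(ivec w) m - u m| ≤ ε * (sd * A1) := by
        calc |(ivec w) m - u m| ≤ ε * ‖ivec w‖ := hdiff (ivec w) m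
          _ ≤ ε * (sd * A1) := mul_le_mul_of_nonneg_left hnu (le_of_lt hpos')
      have h3 : ε * (sd * A1) < 1 := by
        calc ε * (sd * A1) < 1 / (4 * A1 + 1) := hεnum
          _ ≤ 1 := by rw [div_le_one (by positivity)]; nlinarith
      have h4 : |(ivec w) m| < (α m : ℝ) + 1 := by
        have := hzK' m
        linarith
      have : |((w m : ℤ) : ℝ)| < (α m : ℝ) + 1 := h4
      have : |w m| < α m + 1 := by exact_mod_cast this
      omega
    · -- w ≠ v
      intro hwv
      apply hvnot
      rw [← hwv]
      exact hzK
  -- counting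
  have hfin : (ivec '' (↑(T.erase v) : Set (Fin d → ℤ))).Finite :=
    ((T.erase v).finite_toSet).image _
  have hcount : latticeCount K ≤ (T.erase v).card := by
    calc latticeCount K = (K ∩ intLattice d).ncard := rfl
      _ ≤ (ivec '' (↑(T.erase v) : Set (Fin d → ℤ))).ncard := Set.ncard_le_ncard hincl hfin
      _ = ((↑(T.erase v) : Set (Fin d → ℤ))).ncard := Set.ncard_image_of_injective _ ivec_inj
      _ = (T.erase v).card := Set.ncard_coe_finset _
  have herase : (T.erase v).card = T.card - 1 := Finset.card_erase_of_mem hvT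
  have hT1 : 1 ≤ T.card := Finset.card_pos.mpr ⟨v, hvT⟩
  have hfinal : (latticeCount K : ℤ) ≤ (T.card : ℤ) - 1 := by
    have h1 : (latticeCount K : ℤ) ≤ ((T.erase v).card : ℤ) := by exact_mod_cast hcount
    have h2 : ((T.erase v).card : ℤ) = (T.card : ℤ) - 1 := by
      rw [herase]
      push_cast [Nat.cast_sub hT1]
      ring
    linarith
  ------------------------------------------------------------------
  -- conclusion
  ------------------------------------------------------------------
  have hprod : ∏ i : Fin d, ⌊2 / succMin K (i.1 + 1) + 1⌋ = ∏ i : Fin d, (2 * α i + 1) :=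
    Finset.prod_congr rfl fun i _ => hfactor i
  calc (latticeCount K : ℤ) ≤ (T.card : ℤ) - 1 := hfinal
    _ = (∏ i : Fin d, (2 * α i + 1)) - 1 := by rw [hTcard]
    _ < ∏ i : Fin d, (2 * α i + 1) := by linarith
    _ = ∏ i : Fin d, ⌊2 / succMin K (i.1 + 1) + 1⌋ := hprod.symm
end
end

section
/- Let d ≥ 1, let α : Fin d → ℝ with α_1 ≥ α_2 ≥ … ≥ α_d > 0, let K₀ = {x ∈ ℝ^d : |x_i| ≤ α_i for all i}, and let Δ = inf{dist(y, K₀) : y ∈ ℤ^d, y ∉ K₀} be the Euclidean distance from the lattice points outside K₀ to K₀. If R is a d×d real orthogonal matrix with ‖R − I‖ < Δ / (√d · (α_1 + Δ)), then (R·K₀) ∩ ℤ^d ⊆ K₀ ∩ ℤ^d, and consequently G(R·K₀) ≤ G(K₀). -/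
open scoped Pointwise Matrix

noncomputable section

lemma aux_clm_apply {d : ℕ} (A : Matrix (Fin d) (Fin d) ℝ) (x : EuclideanSpace ℝ (Fin d)) :
    Matrix.toEuclideanCLM (𝕜 := ℝ) A x = Matrix.toEuclideanLin A x := by
  have := Matrix.coe_toEuclideanCLM_eq_toEuclideanLin (n := Fin d) (𝕜 := ℝ) A
  exact DFunLike.congr_fun this x

lemma aux_norm_le {d : ℕ} (x : EuclideanSpace ℝ (Fin d)) (c : ℝ) (hc : 0 ≤ c)
    (h : ∀ i, |x i| ≤ c) : ‖x‖ ≤ Real.sqrt d * c := by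
  rw [EuclideanSpace.norm_eq]
  rw [show Real.sqrt d * c = Real.sqrt (d * c^2) by
    rw [Real.sqrt_mul (Nat.cast_nonneg d), Real.sqrt_sq hc]]
  apply Real.sqrt_le_sqrt
  calc ∑ i, ‖x i‖^2 ≤ ∑ _i : Fin d, c^2 := by
        apply Finset.sum_le_sum
        intro i _
        rw [Real.norm_eq_abs]
        exact pow_le_pow_left₀ (abs_nonneg _) (h i) 2
    _ = d * c^2 := by
        rw [Finset.sum_const, Finset.card_univ, Fintype.card_fin, nsmul_eq_mul]

/-- Explicit stability radius: if `‖R - I‖ < Δ / (√d (α₁ + Δ))`, where `Δ` is the distance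
from the external lattice points to the box `K₀`, then `(R·K₀) ∩ ℤ^d ⊆ K₀ ∩ ℤ^d` and
`G(R·K₀) ≤ G(K₀)`. -/
theorem explicit_stability_radius (d : ℕ) (hd : 0 < d)
    (α : Fin d → ℝ) (hpos : ∀ i, 0 < α i) (hmono : ∀ i j : Fin d, i ≤ j → α j ≤ α i)
    (R : Matrix (Fin d) (Fin d) ℝ) (hR : Rᵀ * R = 1)
    (hsmall : matOpNorm (R - 1) <
      sInf ((fun y => Metric.infDist y {x : EuclideanSpace ℝ (Fin d) | ∀ i, |x i| ≤ α i}) ''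
          (intLattice d \ {x : EuclideanSpace ℝ (Fin d) | ∀ i, |x i| ≤ α i})) /
        (Real.sqrt d *
          (α ⟨0, hd⟩ +
            sInf ((fun y =>
                Metric.infDist y {x : EuclideanSpace ℝ (Fin d) | ∀ i, |x i| ≤ α i}) ''
              (intLattice d \ {x : EuclideanSpace ℝ (Fin d) | ∀ i, |x i| ≤ α i}))))) :
    (⇑(Matrix.toEuclideanLin R) '' {x : EuclideanSpace ℝ (Fin d) | ∀ i, |x i| ≤ α i})
        ∩ intLattice d ⊆
      {x : EuclideanSpace ℝ (Fin d) | ∀ i, |x i| ≤ α i} ∩ intLattice d ∧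
    latticeCount
        (⇑(Matrix.toEuclideanLin R) '' {x : EuclideanSpace ℝ (Fin d) | ∀ i, |x i| ≤ α i}) ≤
      latticeCount {x : EuclideanSpace ℝ (Fin d) | ∀ i, |x i| ≤ α i} := by
  set K₀ : Set (EuclideanSpace ℝ (Fin d)) := {x | ∀ i, |x i| ≤ α i} with hK₀def
  set Δ : ℝ := sInf ((fun y => Metric.infDist y K₀) '' (intLattice d \ K₀)) with hΔdef
  set α₁ : ℝ := α ⟨0, hd⟩ with hα₁def
  have hα₁pos : 0 < α₁ := hpos _
  have hαi : ∀ i, α i ≤ α₁ := fun i => hmono ⟨0, hd⟩ i (by simp [Fin.le_def])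
  have hΔ0 : 0 ≤ Δ := by
    apply Real.sInf_nonneg
    rintro a ⟨y, _, rfl⟩
    exact Metric.infDist_nonneg
  have hsqrt : 0 < Real.sqrt d := Real.sqrt_pos.mpr (by exact_mod_cast hd)
  have hden : 0 < Real.sqrt d * (α₁ + Δ) := mul_pos hsqrt (by linarith)
  have hε0 : 0 ≤ matOpNorm (R - 1) := norm_nonneg _
  have hΔpos : 0 < Δ := by
    have h1 : 0 < Δ / (Real.sqrt d * (α₁ + Δ)) := lt_of_le_of_lt hε0 hsmall
    rcases div_pos_iff.mp h1 with ⟨h, _⟩ | ⟨_, h⟩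
    · exact h
    · linarith
  have hsub : (⇑(Matrix.toEuclideanLin R) '' K₀) ∩ intLattice d ⊆ K₀ ∩ intLattice d := by
    rintro z ⟨⟨x, hxK, rfl⟩, hzL⟩
    refine ⟨?_, hzL⟩
    by_contra hzK
    have hΔle : Δ ≤ Metric.infDist (Matrix.toEuclideanLin R x) K₀ := by
      apply csInf_le
      · refine ⟨0, ?_⟩
        rintro a ⟨y, _, rfl⟩
        exact Metric.infDist_nonneg
      · exact ⟨_, ⟨hzL, hzK⟩, rfl⟩
    have hd1 : Metric.infDist (Matrix.toEuclideanLin R x) K₀ ≤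
        dist (Matrix.toEuclideanLin R x) x := Metric.infDist_le_dist_of_mem hxK
    have hnx : ‖x‖ ≤ Real.sqrt d * α₁ :=
      aux_norm_le x α₁ hα₁pos.le (fun i => (hxK i).trans (hαi i))
    have hsubapp : Matrix.toEuclideanCLM (𝕜 := ℝ) (R - 1) x =
        Matrix.toEuclideanLin R x - x := by
      rw [map_sub, map_one, ContinuousLinearMap.sub_apply, ContinuousLinearMap.one_apply,
        aux_clm_apply]
    have key : ‖Matrix.toEuclideanLin R x - x‖ ≤ matOpNorm (R - 1) * ‖x‖ := by
      rw [← hsubapp]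
      exact (Matrix.toEuclideanCLM (𝕜 := ℝ) (R - 1)).le_opNorm x
    have h2 : matOpNorm (R - 1) * ‖x‖ ≤ matOpNorm (R - 1) * (Real.sqrt d * α₁) :=
      mul_le_mul_of_nonneg_left hnx hε0
    have h3 : matOpNorm (R - 1) * (Real.sqrt d * α₁) <
        Δ / (Real.sqrt d * (α₁ + Δ)) * (Real.sqrt d * α₁) :=
      mul_lt_mul_of_pos_right hsmall (mul_pos hsqrt hα₁pos)
    have h4 : Δ / (Real.sqrt d * (α₁ + Δ)) * (Real.sqrt d * α₁) < Δ := by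
      rw [div_mul_eq_mul_div, div_lt_iff₀ hden]
      nlinarith [mul_pos (mul_pos hΔpos hsqrt) hΔpos]
    have hdist : dist (Matrix.toEuclideanLin R x) x = ‖Matrix.toEuclideanLin R x - x‖ :=
      dist_eq_norm _ _
    linarith
  refine ⟨hsub, ?_⟩
  have hfin : (K₀ ∩ intLattice d).Finite := by
    have hsubf : K₀ ∩ intLattice d ⊆
        (fun n : Fin d → ℤ => (WithLp.toLp 2 (fun i => (n i : ℝ)) : EuclideanSpace ℝ (Fin d))) ''
          (Set.Icc (fun _ => -⌈α₁⌉) (fun _ => ⌈α₁⌉)) := by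
      rintro x ⟨hxK, hxL⟩
      choose n hn using hxL
      refine ⟨n, ⟨?_, ?_⟩, ?_⟩
      · intro i
        have h1 : |x i| ≤ α₁ := (hxK i).trans (hαi i)
        rw [hn i] at h1
        have h2 := (abs_le.mp h1).1
        have h3 : ((-⌈α₁⌉ : ℤ) : ℝ) ≤ (n i : ℝ) := by
          push_cast
          have := Int.le_ceil α₁
          linarith
        exact_mod_cast h3
      · intro i
        have h1 : |x i| ≤ α₁ := (hxK i).trans (hαi i)
        rw [hn i] at h1
        have h2 := (abs_le.mp h1).2
        have h3 : (n i : ℝ) ≤ ((⌈α₁⌉ : ℤ) : ℝ) := by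
          have := Int.le_ceil α₁
          push_cast
          linarith
        exact_mod_cast h3
      · ext i
        exact (hn i).symm
    exact ((Set.finite_Icc _ _).image _).subset hsubf
  exact Set.ncard_le_ncard hsub hfin
end
end

section
/- Let d ≥ 1 and let α : Fin d → ℝ satisfy α_i > 1 and α_i ∉ ℤ for all i. Set p₀ = (ln d) / (min_{1 ≤ i ≤ d} ln(α_i/⌊α_i⌋)). Then for every real p ≥ max(p₀, 1), the L_p-ball K_p(α) = {x ∈ ℝ^d : Σ_i |x_i/α_i|^p ≤ 1} and the box K_∞(α) = {x ∈ ℝ^d : |x_i| ≤ α_i for all i} contain exactly the same integer points: K_p(α) ∩ ℤ^d = K_∞(α) ∩ ℤ^d. -/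
open scoped Pointwise

noncomputable section

/-- Sharp threshold for stability of the integer points: for
`p ≥ max (ln d / min_i ln(α i / ⌊α i⌋)) 1`, the `L_p`-ball and the box contain exactly the
same integer points. -/
theorem Lp_ball_same_lattice_points (d : ℕ) (hd : 0 < d)
    (α : Fin d → ℝ) (hα1 : ∀ i, 1 < α i) (hαint : ∀ i, ¬∃ n : ℤ, α i = (n : ℝ))
    (p : ℝ)
    (hp : max (Real.log d /
        Finset.univ.inf' (Finset.univ_nonempty_iff.mpr ⟨⟨0, hd⟩⟩)
          (fun i => Real.log (α i / (⌊α i⌋ : ℝ)))) 1 ≤ p) :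
    {x : EuclideanSpace ℝ (Fin d) | ∑ i, |x i / α i| ^ p ≤ 1} ∩ intLattice d =
      {x : EuclideanSpace ℝ (Fin d) | ∀ i, |x i| ≤ α i} ∩ intLattice d := by

  have hp1 : (1:ℝ) ≤ p := le_trans (le_max_right _ _) hp
  have hp0 : (0:ℝ) < p := lt_of_lt_of_le one_pos hp1
  have hαpos : ∀ i, (0:ℝ) < α i := fun i => lt_trans one_pos (hα1 i)
  have hfloor1 : ∀ i, (1:ℝ) ≤ (⌊α i⌋ : ℝ) := fun i => by
    exact_mod_cast Int.le_floor.mpr (by exact_mod_cast (hα1 i).le)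
  have hfloorpos : ∀ i, (0:ℝ) < (⌊α i⌋ : ℝ) := fun i => lt_of_lt_of_le one_pos (hfloor1 i)
  have hfl : ∀ i, (⌊α i⌋ : ℝ) < α i := fun i =>
    lt_of_le_of_ne (Int.floor_le _) (fun h => hαint i ⟨⌊α i⌋, h.symm⟩)
  have hratio : ∀ i, 1 < α i / (⌊α i⌋:ℝ) := fun i => (one_lt_div (hfloorpos i)).mpr (hfl i)
  have hlogpos : ∀ i, 0 < Real.log (α i / (⌊α i⌋:ℝ)) := fun i => Real.log_pos (hratio i)
  set m := Finset.univ.inf' (Finset.univ_nonempty_iff.mpr ⟨⟨0, hd⟩⟩)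
      (fun i => Real.log (α i / (⌊α i⌋ : ℝ))) with hm
  have hmpos : 0 < m := by
    rw [hm, Finset.lt_inf'_iff]
    exact fun i _ => hlogpos i
  have hlogd : Real.log d ≤ p * m := by
    have h1 : Real.log d / m ≤ p := le_trans (le_max_left _ _) hp
    calc Real.log d = (Real.log d / m) * m := by field_simp
    _ ≤ p * m := mul_le_mul_of_nonneg_right h1 hmpos.le
  have hkey : ∀ i, ((⌊α i⌋:ℝ)/α i) ^ p ≤ 1 / d := by
    intro i
    have hmin : m ≤ Real.log (α i / (⌊α i⌋:ℝ)) := Finset.inf'_le _ (Finset.mem_univ i)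
    have hpd : Real.log d ≤ p * Real.log (α i / (⌊α i⌋:ℝ)) :=
      le_trans hlogd (mul_le_mul_of_nonneg_left hmin hp0.le)
    have hdpos : (0:ℝ) < d := by exact_mod_cast hd
    have hdle : (d:ℝ) ≤ (α i / (⌊α i⌋:ℝ)) ^ p := by
      rw [Real.le_rpow_iff_log_le hdpos (lt_trans one_pos (hratio i))]
      exact hpd
    have hinv : ((⌊α i⌋:ℝ)/α i) ^ p = ((α i / (⌊α i⌋:ℝ)) ^ p)⁻¹ := by
      rw [← Real.inv_rpow (div_pos (hαpos i) (hfloorpos i)).le, inv_div]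
    rw [hinv, one_div]
    exact inv_anti₀ hdpos hdle
  ext x
  simp only [Set.mem_inter_iff, Set.mem_setOf_eq]
  constructor
  · rintro ⟨hsum, hlat⟩
    refine ⟨fun i => ?_, hlat⟩
    have hterm : |x i / α i| ^ p ≤ 1 := by
      refine le_trans ?_ hsum
      exact Finset.single_le_sum (f := fun i => |x i / α i| ^ p)
        (fun j _ => Real.rpow_nonneg (abs_nonneg _) p) (Finset.mem_univ i)
    have habs : |x i / α i| ≤ 1 := by
      by_contra hc
      push_neg at hc
      have : 1 < |x i / α i| ^ p :=
        Real.one_lt_rpow_iff_of_pos (lt_trans one_pos hc) |>.mpr (Or.inl ⟨hc, hp0⟩)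
      linarith
    rw [abs_div, abs_of_pos (hαpos i), div_le_one (hαpos i)] at habs
    exact habs
  · rintro ⟨hbox, hlat⟩
    refine ⟨?_, hlat⟩
    have hbd : ∀ i, |x i| ≤ (⌊α i⌋:ℝ) := by
      intro i
      obtain ⟨n, hn⟩ := hlat i
      rw [hn, ← Int.cast_abs]
      exact Int.cast_le.mpr (Int.le_floor.mpr (by rw [Int.cast_abs, ← hn]; exact hbox i) : |n| ≤ ⌊α i⌋)
    have hterm : ∀ i, |x i / α i| ^ p ≤ 1 / d := by
      intro i
      refine le_trans ?_ (hkey i)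
      apply Real.rpow_le_rpow (abs_nonneg _) _ hp0.le
      rw [abs_div, abs_of_pos (hαpos i)]
      gcongr
      · exact (hαpos i).le
      · exact hbd i
    calc ∑ i, |x i / α i| ^ p ≤ ∑ _i : Fin d, (1:ℝ)/d :=
          Finset.sum_le_sum (fun i _ => hterm i)
    _ = 1 := by
      rw [Finset.sum_const, Finset.card_univ, Fintype.card_fin, nsmul_eq_mul]
      field_simp
end
end

section
/- Let d ≥ 1 and let α : Fin d → ℝ satisfy α_i > 1 and α_i ∉ ℤ for all i. Set p₀ = (ln d) / (min_{1 ≤ i ≤ d} ln(α_i/⌊α_i⌋)). Then for every real p ≥ max(p₀, 1), the integer hull of the L_p-ball coincides with that of the box: conv(K_p(α) ∩ ℤ^d) = conv(K_∞(α) ∩ ℤ^d), where conv denotes the convex hull in ℝ^d. -/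
open scoped Pointwise

noncomputable section

/-!
A lattice point of the box `K_∞(α)` has `|x_i| ≤ ⌊α_i⌋`, so each summand `|x_i/α_i|^p` is at most
`(⌊α_i⌋/α_i)^p ≤ 1/d` once `p · ln(α_i/⌊α_i⌋) ≥ ln d`; hence it lies in `K_p(α)`. Conversely
`K_p(α) ⊆ K_∞(α)`. The two bodies thus contain the same lattice points and have the same integer hull.
-/

open Real

theorem abs_le_of_sum_abs_div_rpow_le_one {ι : Type*} [Fintype ι] {x α : ι → ℝ} {p : ℝ}
    (hp : 0 < p) (hα : ∀ i, 0 < α i) (h : ∑ i, |x i / α i| ^ p ≤ 1) (i : ι) :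
    |x i| ≤ α i := by
  have hterm : |x i / α i| ^ p ≤ 1 :=
    (Finset.single_le_sum (f := fun j => |x j / α j| ^ p)
      (fun j _ => rpow_nonneg (abs_nonneg _) p) (Finset.mem_univ i)).trans h
  have hratio : |x i / α i| ≤ 1 := by
    by_contra! hlt
    exact (one_lt_rpow hlt hp).not_ge hterm
  rwa [abs_div, abs_of_pos (hα i), div_le_one (hα i)] at hratio

theorem abs_intCast_le_floor {n : ℤ} {a : ℝ} (h : |(n : ℝ)| ≤ a) : |(n : ℝ)| ≤ ⌊a⌋ := by
  rw [← Int.cast_abs] at h ⊢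
  exact_mod_cast Int.le_floor.mpr h

theorem div_rpow_le_inv_of_log_le {a b N p : ℝ} (ha : 0 < a) (hb : 0 < b) (hN : 0 < N)
    (hlog : log N ≤ p * log (a / b)) : (b / a) ^ p ≤ N⁻¹ := by
  have hN_le : N ≤ (a / b) ^ p := (le_rpow_iff_log_le hN (div_pos ha hb)).mpr hlog
  rw [← inv_div, inv_rpow (div_pos ha hb).le]
  exact inv_anti₀ hN hN_le

theorem abs_intCast_div_rpow_le_inv {n : ℤ} {a N p : ℝ} (ha : 0 < a) (hfloor : 0 < ⌊a⌋)
    (hN : 0 < N) (hp : 0 ≤ p) (hlog : log N ≤ p * log (a / ⌊a⌋)) (hn : |(n : ℝ)| ≤ a) :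
    |n / a| ^ p ≤ N⁻¹ := by
  have hfloor' : (0 : ℝ) < ⌊a⌋ := by exact_mod_cast hfloor
  calc |n / a| ^ p ≤ (⌊a⌋ / a) ^ p := by
        rw [abs_div, abs_of_pos ha]
        gcongr
        exact abs_intCast_le_floor hn
    _ ≤ N⁻¹ := div_rpow_le_inv_of_log_le ha hfloor' hN hlog

theorem sum_le_one_of_forall_le_inv_card {ι : Type*} [Fintype ι] [Nonempty ι] {f : ι → ℝ}
    (h : ∀ i, f i ≤ (Fintype.card ι : ℝ)⁻¹) : ∑ i, f i ≤ 1 := by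
  calc ∑ i, f i ≤ Fintype.card ι • (Fintype.card ι : ℝ)⁻¹ :=
        Finset.sum_le_card_nsmul _ _ _ (fun i _ => h i)
    _ = 1 := by rw [nsmul_eq_mul, mul_inv_cancel₀ (by exact_mod_cast Fintype.card_ne_zero)]

/-- Stability of the integer hull: for `p ≥ max (ln d / min_i ln(α i / ⌊α i⌋)) 1`, the
integer hull of the `L_p`-ball coincides with that of the box. -/
theorem Lp_ball_same_integer_hull (d : ℕ) (hd : 0 < d)
    (α : Fin d → ℝ) (hα1 : ∀ i, 1 < α i) (hαint : ∀ i, ¬∃ n : ℤ, α i = (n : ℝ))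
    (p : ℝ)
    (hp : max (Real.log d /
        Finset.univ.inf' (Finset.univ_nonempty_iff.mpr ⟨⟨0, hd⟩⟩)
          (fun i => Real.log (α i / (⌊α i⌋ : ℝ)))) 1 ≤ p) :
    convexHull ℝ
        ({x : EuclideanSpace ℝ (Fin d) | ∑ i, |x i / α i| ^ p ≤ 1} ∩ intLattice d) =
      convexHull ℝ
        ({x : EuclideanSpace ℝ (Fin d) | ∀ i, |x i| ≤ α i} ∩ intLattice d) := by
  have : NeZero d := ⟨hd.ne'⟩
  have hp0 : 0 < p := one_pos.trans_le ((le_max_right _ _).trans hp)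
  have hα0 (i : Fin d) : 0 < α i := one_pos.trans (hα1 i)
  have hfloor (i : Fin d) : 0 < ⌊α i⌋ := Int.floor_pos.mpr (hα1 i).le
  have hratio (i : Fin d) : 1 < α i / ⌊α i⌋ := by
    refine (one_lt_div (by exact_mod_cast hfloor i)).mpr ?_
    exact (Int.floor_le _).lt_of_ne fun h => hαint i ⟨_, h.symm⟩
  have hlog (i : Fin d) : log d ≤ p * log (α i / ⌊α i⌋) := by
    have hmin_pos : 0 < Finset.univ.inf' Finset.univ_nonempty fun j => log (α j / ⌊α j⌋) :=
      (Finset.lt_inf'_iff _).mpr fun j _ => log_pos (hratio j)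
    have := (div_le_iff₀ hmin_pos).mp ((le_max_left _ _).trans hp)
    exact this.trans (mul_le_mul_of_nonneg_left (Finset.inf'_le _ (Finset.mem_univ i)) hp0.le)
  congr 1
  ext x
  refine and_congr_left fun hx => ⟨abs_le_of_sum_abs_div_rpow_le_one hp0 hα0, fun hbox => ?_⟩
  refine sum_le_one_of_forall_le_inv_card fun i => ?_
  obtain ⟨n, hn⟩ := hx i
  rw [Fintype.card_fin, hn]
  exact abs_intCast_div_rpow_le_inv (hα0 i) (hfloor i) (by positivity) hp0.le (hlog i)
    (hn ▸ hbox i)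
end
end

section
/- Let d ≥ 1 and let α : Fin d → ℝ satisfy α_i > 1 and α_i ∉ ℤ for all i. Set p₀ = (ln d) / (min_{1 ≤ i ≤ d} ln(α_i/⌊α_i⌋)). Then for every real p ≥ max(p₀, 1), the lattice point enumerators agree: G(K_p(α)) = G(K_∞(α)) = ∏_{i=1}^d (2⌊α_i⌋ + 1). -/
open scoped Pointwise

noncomputable section

/-- For `p ≥ max (ln d / min_i ln(α i / ⌊α i⌋)) 1`, the lattice point enumerators agree:
`G(K_p(α)) = G(K_∞(α)) = ∏ i (2⌊α i⌋ + 1)`. -/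
theorem Lp_ball_lattice_count (d : ℕ) (hd : 0 < d)
    (α : Fin d → ℝ) (hα1 : ∀ i, 1 < α i) (hαint : ∀ i, ¬∃ n : ℤ, α i = (n : ℝ))
    (p : ℝ)
    (hp : max (Real.log d /
        Finset.univ.inf' (Finset.univ_nonempty_iff.mpr ⟨⟨0, hd⟩⟩)
          (fun i => Real.log (α i / (⌊α i⌋ : ℝ)))) 1 ≤ p) :
    latticeCount {x : EuclideanSpace ℝ (Fin d) | ∑ i, |x i / α i| ^ p ≤ 1} =
        latticeCount {x : EuclideanSpace ℝ (Fin d) | ∀ i, |x i| ≤ α i} ∧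
      (latticeCount {x : EuclideanSpace ℝ (Fin d) | ∀ i, |x i| ≤ α i} : ℤ) =
        ∏ i, (2 * ⌊α i⌋ + 1) := by

  -- basic facts
  classical
  have hp1 : (1:ℝ) ≤ p := le_trans (le_max_right _ _) hp
  have hp0 : (0:ℝ) < p := lt_of_lt_of_le one_pos hp1
  have hαpos : ∀ i, (0:ℝ) < α i := fun i => lt_trans one_pos (hα1 i)
  have hfloor1 : ∀ i, 1 ≤ ⌊α i⌋ := fun i => Int.le_floor.mpr (by exact_mod_cast (hα1 i).le)
  have hfloorpos : ∀ i, (0:ℝ) < (⌊α i⌋:ℝ) := fun i => by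
    have := hfloor1 i; exact_mod_cast lt_of_lt_of_le Int.zero_lt_one this
  have hfloor_lt : ∀ i, (⌊α i⌋ : ℝ) < α i := fun i => by
    rcases lt_or_eq_of_le (Int.floor_le (α i)) with h | h
    · exact h
    · exact absurd ⟨⌊α i⌋, h.symm⟩ (hαint i)
  have hratio : ∀ i, (1:ℝ) < α i / ⌊α i⌋ := fun i =>
    (one_lt_div (hfloorpos i)).mpr (hfloor_lt i)
  have hd0 : (0:ℝ) < d := by exact_mod_cast hd
  set L := Finset.univ.inf' (Finset.univ_nonempty_iff.mpr ⟨⟨0, hd⟩⟩)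
      (fun i => Real.log (α i / (⌊α i⌋ : ℝ))) with hL
  have hLpos : 0 < L := by
    rw [hL, Finset.lt_inf'_iff]
    exact fun i _ => Real.log_pos (hratio i)
  have key : ∀ i, (d:ℝ) ≤ (α i / ⌊α i⌋) ^ p := by
    intro i
    have hbpos : (0:ℝ) < α i / ⌊α i⌋ := lt_trans one_pos (hratio i)
    have hLle : Real.log d / L ≤ p := le_trans (le_max_left _ _) hp
    have h1 : Real.log d ≤ p * L := (div_le_iff₀ hLpos).mp hLle
    have h2 : p * L ≤ p * Real.log (α i / ⌊α i⌋) :=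
      mul_le_mul_of_nonneg_left (Finset.inf'_le _ (Finset.mem_univ i)) hp0.le
    have h3 : Real.log d ≤ Real.log ((α i / ⌊α i⌋) ^ p) := by
      rw [Real.log_rpow hbpos]; exact h1.trans h2
    exact (Real.log_le_log_iff hd0 (Real.rpow_pos_of_pos hbpos p)).mp h3
  -- integer box membership characterisation
  have habs_le : ∀ (i : Fin d) (n : ℤ), |(n:ℝ)| ≤ α i ↔ |n| ≤ ⌊α i⌋ := by
    intro i n
    rw [Int.le_floor, Int.cast_abs]
  -- the two lattice point sets coincide
  have hseteq : {x : EuclideanSpace ℝ (Fin d) | ∑ i, |x i / α i| ^ p ≤ 1} ∩ intLattice d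
      = {x : EuclideanSpace ℝ (Fin d) | ∀ i, |x i| ≤ α i} ∩ intLattice d := by
    ext x
    simp only [Set.mem_inter_iff, Set.mem_setOf_eq, intLattice]
    constructor
    · rintro ⟨hsum, hlat⟩
      refine ⟨fun i => ?_, hlat⟩
      have hterm : |x i / α i| ^ p ≤ 1 := by
        have hnn : ∀ j ∈ Finset.univ, (0:ℝ) ≤ |x j / α j| ^ p := fun j _ =>
          Real.rpow_nonneg (abs_nonneg _) p
        exact le_trans (Finset.single_le_sum hnn (Finset.mem_univ i)) hsum
      have h1 : |x i / α i| ≤ 1 := by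
        by_contra hgt
        push_neg at hgt
        have : (1:ℝ) < |x i / α i| ^ p := by
          calc (1:ℝ) = 1 ^ p := (Real.one_rpow p).symm
          _ < |x i / α i| ^ p := Real.rpow_lt_rpow zero_le_one hgt hp0
        linarith
      rw [abs_div, abs_of_pos (hαpos i), div_le_one (hαpos i)] at h1
      exact h1
    · rintro ⟨hbox, hlat⟩
      refine ⟨?_, hlat⟩
      have hterm : ∀ i, |x i / α i| ^ p ≤ 1 / d := by
        intro i
        obtain ⟨n, hn⟩ := hlat i
        have hni : |n| ≤ ⌊α i⌋ := (habs_le i n).mp (hn ▸ hbox i)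
        have h1 : |x i / α i| ≤ (⌊α i⌋:ℝ) / α i := by
          rw [abs_div, abs_of_pos (hαpos i), div_le_div_iff_of_pos_right (hαpos i), hn]
          calc |(n:ℝ)| = ((|n|:ℤ):ℝ) := by push_cast; rfl
          _ ≤ (⌊α i⌋:ℝ) := by exact_mod_cast hni
        have h2 : |x i / α i| ^ p ≤ ((⌊α i⌋:ℝ) / α i) ^ p :=
          Real.rpow_le_rpow (abs_nonneg _) h1 hp0.le
        have h3 : ((⌊α i⌋:ℝ) / α i) ^ p = ((α i / ⌊α i⌋) ^ p)⁻¹ := by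
          rw [← Real.inv_rpow (le_of_lt (lt_trans one_pos (hratio i))), inv_div]
        have h4 : ((α i / ⌊α i⌋) ^ p)⁻¹ ≤ (d:ℝ)⁻¹ :=
          inv_anti₀ hd0 (key i)
        rw [one_div]
        exact h2.trans (h3 ▸ h4)
      calc ∑ i, |x i / α i| ^ p ≤ ∑ _i : Fin d, (1:ℝ)/d := Finset.sum_le_sum fun i _ => hterm i
      _ = d * (1/d) := by rw [Finset.sum_const, Finset.card_univ, Fintype.card_fin, nsmul_eq_mul]
      _ = 1 := by field_simp
  -- counting the box
  set f : (Fin d → ℤ) → EuclideanSpace ℝ (Fin d) := fun n => WithLp.toLp 2 (fun i => (n i : ℝ)) with hf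
  have hfinj : Function.Injective f := by
    intro a b h
    funext i
    have h2 : ((a i : ℝ)) = (b i : ℝ) := congrFun (congrArg WithLp.ofLp h) i
    exact_mod_cast h2
  set T : Finset (Fin d → ℤ) := Fintype.piFinset fun i => Finset.Icc (-⌊α i⌋) ⌊α i⌋ with hT
  have hbox_eq : {x : EuclideanSpace ℝ (Fin d) | ∀ i, |x i| ≤ α i} ∩ intLattice d
      = ↑(Finset.image f T) := by
    ext x
    simp only [Set.mem_inter_iff, Set.mem_setOf_eq, intLattice, Finset.coe_image,
      Set.mem_image, Finset.mem_coe, hT, Fintype.mem_piFinset, Finset.mem_Icc]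
    constructor
    · rintro ⟨hbox, hlat⟩
      choose n hn using hlat
      refine ⟨n, fun i => ?_, ?_⟩
      · have := (habs_le i (n i)).mp ((hn i) ▸ hbox i)
        exact abs_le.mp this
      · ext i
        exact (hn i).symm
    · rintro ⟨n, hn, rfl⟩
      constructor
      · intro i
        exact (habs_le i (n i)).mpr (abs_le.mpr (hn i))
      · exact fun i => ⟨n i, rfl⟩
  constructor
  · unfold latticeCount
    rw [hseteq]
  · unfold latticeCount
    rw [hbox_eq, Set.ncard_coe_finset, Finset.card_image_of_injective T hfinj, hT,
      Fintype.card_piFinset]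
    push_cast
    refine Finset.prod_congr rfl fun i _ => ?_
    rw [Int.card_Icc]
    have h1 : (0:ℤ) ≤ ⌊α i⌋ + 1 - -⌊α i⌋ := by have := hfloor1 i; omega
    rw [Int.toNat_of_nonneg h1]
    have := hfloor1 i
    omega
end
end
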